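/- Pólya urn scheme for the MRF-constrained MFM (Theorem 1): under the prior P(z|q) ∝ (∏_i q_{z_i}) exp(d Σ_{i<i'} g_{ii'} 1(z_i=z_{i'})), q|K ~ Dir(α_0,...,α_0), K−1 ~ Poisson(λ), the conditional prior of assigning point i satisfies P(z_i = k | z_{−i}) ∝ (n_{k,−i} + α_0) exp(d Σ_{i'} g_{ii'} 1(z_{i'} = k)) for an existing cluster k, and ∝ α_0 · V_n(|z_{−i}|+1)/V_n(|z_{−i}|) for a new cluster, where n_{k,−i} is the size of cluster k excluding i and V_n(t) = Σ_K [C(K,t) t!/(Kα_0)^{(n)}] P(K). -/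

import Mathlib

/-!
Integrating out the Dirichlet weights and counting the `(K+1)(K)⋯(K-t+2)` labelings of a
partition with `t` blocks by `K+1` labels, the prior mass of a partition `𝒞` factorises as
`V_n(t) · ∏_{c ∈ 𝒞} α_0^{(|c|)} · exp(d E)`, where the MRF interaction `E` only depends on `𝒞`.
Putting point `i` into an existing cluster `k` keeps `t`, multiplies the block product by
`n_{k,-i} + α_0` and adds `Σ_{i'} g_{ii'} 1(z_{i'} = k)` to `E`; opening a new cluster raises `t`
by one, multiplies the product by `α_0^{(1)} = α_0` and leaves `E` unchanged. All other factors
are common to every choice of `k`.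
-/

open Finset

/-- The unordered partition of `{1,...,n}` induced by a labeling `z`. -/
def partitionOf {n : ℕ} {α : Type*} [DecidableEq α] (z : Fin n → α) :
    Finset (Finset (Fin n)) :=
  Finset.univ.image (fun i => Finset.univ.filter (fun i' => z i' = z i))

/-- The rising factorial `x^{(m)} = Γ(x+m)/Γ(x)`. -/
noncomputable def risingGamma (x : ℝ) (m : ℕ) : ℝ := Real.Gamma (x + m) / Real.Gamma x

/-- Marginal prior mass of a partition `𝒞` under the MRF-constrained MFM model
`P(z|q) ∝ (∏_i q_{z_i}) exp(d Σ_{i<i'} g_{ii'} 1(z_i=z_{i'}))`,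
`q | K ~ Dir(α_0,...,α_0)`, `K − 1 ~ Poisson(λ)`: we mix over `K` (the index `K : ℕ`
corresponding to `K+1` components), marginalize `q`, and sum over labelings inducing `𝒞`. -/
noncomputable def mrfMfmMass (n : ℕ) (α0 d lam : ℝ) (g : Fin n → Fin n → ℝ)
    (𝒞 : Finset (Finset (Fin n))) : ℝ :=
  ∑' K : ℕ, (Real.exp (-lam) * lam ^ K / (Nat.factorial K : ℝ)) *
    ∑ z ∈ Finset.univ.filter (fun z : Fin n → Fin (K + 1) => partitionOf z = 𝒞),
      (Real.Gamma (((K : ℝ) + 1) * α0) / Real.Gamma ((n : ℝ) + ((K : ℝ) + 1) * α0)) *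
        (∏ l : Fin (K + 1), risingGamma α0 (Finset.univ.filter (fun i => z i = l)).card) *
        Real.exp (d * ∑ i, ∑ i', if i < i' ∧ z i = z i' then g i i' else 0)

/-- The MFM coefficient `V_n(t) = Σ_K [C(K,t) t!/(Kα_0)^{(n)}] P(K)` with
`K − 1 ~ Poisson(λ)` (index `K : ℕ` corresponding to `K+1` components). -/
noncomputable def Vcoef (n : ℕ) (α0 lam : ℝ) (t : ℕ) : ℝ :=
  ∑' K : ℕ, ((K + 1).descFactorial t : ℝ) / risingGamma (((K : ℝ) + 1) * α0) n *
    (Real.exp (-lam) * lam ^ K / (Nat.factorial K : ℝ))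


lemma risingGamma_zero {x : ℝ} (hx : 0 < x) : risingGamma x 0 = 1 := by
  simp [risingGamma, (Real.Gamma_pos_of_pos hx).ne']

lemma risingGamma_succ {x : ℝ} (hx : 0 < x) (m : ℕ) :
    risingGamma x (m + 1) = risingGamma x m * (x + m) := by
  have hxm : x + m ≠ 0 := by positivity
  rw [risingGamma, risingGamma, Nat.cast_succ, ← add_assoc, Real.Gamma_add_one hxm]
  ring

lemma risingGamma_one {x : ℝ} (hx : 0 < x) : risingGamma x 1 = x := by
  simpa [risingGamma_zero hx] using risingGamma_succ hx 0

lemma risingGamma_pos {x : ℝ} (hx : 0 < x) (m : ℕ) : 0 < risingGamma x m := by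
  induction m with
  | zero => simp [risingGamma_zero hx]
  | succ m ih => rw [risingGamma_succ hx]; positivity

lemma pow_le_risingGamma {x : ℝ} (hx : 0 < x) (m : ℕ) : x ^ m ≤ risingGamma x m := by
  induction m with
  | zero => simp [risingGamma_zero hx]
  | succ m ih =>
    rw [risingGamma_succ hx, pow_succ]
    exact mul_le_mul ih (le_add_of_nonneg_right m.cast_nonneg) hx.le (risingGamma_pos hx m).le

section Partition

variable {n : ℕ} {α β : Type*} [DecidableEq α] [DecidableEq β]

lemma partitionOf_eq_partitionOf_iff {z : Fin n → α} {w : Fin n → β} :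
    partitionOf z = partitionOf w ↔ ∀ a b, z a = z b ↔ w a = w b := by
  have block_eq_iff : ∀ a, univ.filter (fun b => z b = z a) = univ.filter (fun b => w b = w a) ↔
      ∀ b, z a = z b ↔ w a = w b := fun a => by
    simp only [Finset.ext_iff, mem_filter, mem_univ, true_and, eq_comm]
  refine ⟨fun h a => (block_eq_iff a).mp ?_,
    fun h => image_congr fun a _ => (block_eq_iff a).mpr (h a)⟩
  obtain ⟨c, -, hc⟩ := mem_image.mp (h ▸ mem_image_of_mem _ (mem_univ a) :
    univ.filter (fun b => z b = z a) ∈ partitionOf w)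
  have hac : w a = w c := by
    have ha : a ∈ univ.filter (fun b => z b = z a) := by simp
    simpa [← hc] using ha
  rw [← hc, hac]

lemma prod_partitionOf {M : Type*} [CommMonoid M] (F : ℕ → M) (w : Fin n → α) :
    ∏ c ∈ partitionOf w, F c.card =
      ∏ l ∈ univ.image w, F (univ.filter (fun a => w a = l)).card := by
  have hpart : partitionOf w = (univ.image w).image (fun l => univ.filter (fun a => w a = l)) := by
    rw [image_image]; rfl
  rw [hpart, prod_image]
  intro l hl l' _ h
  obtain ⟨a, -, rfl⟩ := mem_image.mp hl
  simpa using (Finset.ext_iff.mp h a).mp (by simp)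

lemma prod_fiber_card_eq_prod_image [Fintype β] {M : Type*} [CommMonoid M] {F : ℕ → M}
    (hF : F 0 = 1) (z : Fin n → β) :
    ∏ l, F (univ.filter (fun a => z a = l)).card =
      ∏ l ∈ univ.image z, F (univ.filter (fun a => z a = l)).card := by
  refine (prod_subset (subset_univ _) fun l _ hl => ?_).symm
  have hempty : univ.filter (fun a => z a = l) = ∅ :=
    filter_false_of_mem fun a _ (ha : z a = l) => hl (ha ▸ mem_image_of_mem z (mem_univ a))
  rw [hempty, card_empty, hF]

noncomputable def relabelingEquiv (w : Fin n → α) :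
    {z : Fin n → β // partitionOf z = partitionOf w} ≃ (univ.image w ↪ β) :=
  let w' : Fin n → univ.image w := fun a => ⟨w a, mem_image_of_mem w (mem_univ a)⟩
  have hw' : Function.Surjective w' := fun v => by
    obtain ⟨a, -, ha⟩ := mem_image.mp v.2
    exact ⟨a, Subtype.ext ha⟩
  have hw'_eq : ∀ a b, w' a = w' b ↔ w a = w b := fun _ _ => Subtype.ext_iff
  { toFun := fun z => ⟨fun v => z.1 (Function.surjInv hw' v), fun v v' h => by
      rw [← Function.surjInv_eq hw' v, ← Function.surjInv_eq hw' v', hw'_eq]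
      exact (partitionOf_eq_partitionOf_iff.mp z.2 _ _).mp h⟩
    invFun := fun f => ⟨f ∘ w', partitionOf_eq_partitionOf_iff.mpr fun a b => by
      simp only [Function.comp_apply, f.injective.eq_iff, hw'_eq]⟩
    left_inv := fun z => Subtype.ext <| funext fun a =>
      (partitionOf_eq_partitionOf_iff.mp z.2 _ _).mpr
        (congrArg Subtype.val (Function.surjInv_eq hw' _))
    right_inv := fun f => DFunLike.ext _ _ fun v => congrArg f (Function.surjInv_eq hw' v) }

lemma card_filter_partitionOf_eq [Fintype β] (w : Fin n → α) :
    (univ.filter (fun z : Fin n → β => partitionOf z = partitionOf w)).card =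
      (Fintype.card β).descFactorial (univ.image w).card := by
  rw [← Fintype.card_subtype, Fintype.card_congr (relabelingEquiv w), Fintype.card_embedding_eq,
    Fintype.card_coe]

end Partition

def pairEnergy {ι α : Type*} [LinearOrder ι] [DecidableEq α] (s : Finset ι) (g : ι → ι → ℝ)
    (w : ι → α) : ℝ :=
  ∑ a ∈ s, ∑ b ∈ s, if a < b ∧ w a = w b then g a b else 0

lemma pairEnergy_congr {ι α β : Type*} [LinearOrder ι] [DecidableEq α] [DecidableEq β]
    (s : Finset ι) (g : ι → ι → ℝ) {z : ι → α} {w : ι → β}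
    (h : ∀ a b, z a = z b ↔ w a = w b) : pairEnergy s g z = pairEnergy s g w := by
  simp only [pairEnergy, h]

lemma sum_sum_eq_add_sum_erase {ι M : Type*} [Fintype ι] [DecidableEq ι] [AddCommMonoid M]
    (F : ι → ι → M) (i : ι) :
    ∑ a, ∑ b, F a b = F i i + ∑ b ∈ univ.erase i, (F i b + F b i) +
      ∑ a ∈ univ.erase i, ∑ b ∈ univ.erase i, F a b := by
  simp only [← add_sum_erase univ _ (mem_univ i), sum_add_distrib]
  abel

lemma pairEnergy_update {ι α : Type*} [Fintype ι] [LinearOrder ι] [DecidableEq α]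
    {g : ι → ι → ℝ} (hg : ∀ a b, g a b = g b a) (z : ι → α) (i : ι) (k : α) :
    pairEnergy univ g (Function.update z i k) =
      pairEnergy (univ.erase i) g z + ∑ b ∈ univ.erase i, g i b * if z b = k then 1 else 0 := by
  have hcross : ∀ b ∈ univ.erase i,
      ((if i < b ∧ Function.update z i k i = Function.update z i k b then g i b else 0) +
        if b < i ∧ Function.update z i k b = Function.update z i k i then g b i else 0) =
      g i b * if z b = k then 1 else 0 := fun b hb => by
    have hbi := ne_of_mem_erase hb
    rw [Function.update_self, Function.update_of_ne hbi, hg b i]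
    rcases hbi.lt_or_gt with hlt | hgt
    · simp [hlt, hlt.not_gt, eq_comm]
    · simp [hgt, hgt.not_gt, eq_comm]
  have hrest : ∀ a ∈ univ.erase i, ∀ b ∈ univ.erase i,
      (if a < b ∧ Function.update z i k a = Function.update z i k b then g a b else 0) =
        if a < b ∧ z a = z b then g a b else 0 := fun a ha b hb => by
    rw [Function.update_of_ne (ne_of_mem_erase ha), Function.update_of_ne (ne_of_mem_erase hb)]
  rw [pairEnergy, sum_sum_eq_add_sum_erase _ i, sum_congr rfl hcross,
    sum_congr rfl fun a ha => sum_congr rfl (hrest a ha), pairEnergy,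
    if_neg fun h => lt_irrefl i h.1, zero_add, add_comm]

lemma mrfMfmMass_partitionOf {n : ℕ} {α0 : ℝ} (hα0 : 0 < α0) (d lam : ℝ) (g : Fin n → Fin n → ℝ)
    {α : Type*} [DecidableEq α] (w : Fin n → α) :
    mrfMfmMass n α0 d lam g (partitionOf w) =
      Vcoef n α0 lam (univ.image w).card *
        ((∏ l ∈ univ.image w, risingGamma α0 (univ.filter (fun a => w a = l)).card) *
          Real.exp (d * pairEnergy univ g w)) := by
  set weight := (∏ l ∈ univ.image w, risingGamma α0 (univ.filter (fun a => w a = l)).card) *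
    Real.exp (d * pairEnergy univ g w)
  have hlabeling : ∀ K : ℕ, ∀ z ∈ univ.filter
      (fun z : Fin n → Fin (K + 1) => partitionOf z = partitionOf w),
      (∏ l : Fin (K + 1), risingGamma α0 (univ.filter (fun a => z a = l)).card) *
        Real.exp (d * ∑ a, ∑ b, if a < b ∧ z a = z b then g a b else 0) = weight :=
      fun K z hz => by
    have hzw := (mem_filter.mp hz).2
    change _ * Real.exp (d * pairEnergy univ g z) = weight
    rw [prod_fiber_card_eq_prod_image (risingGamma_zero hα0), ← prod_partitionOf, hzw,
      prod_partitionOf, pairEnergy_congr univ g (partitionOf_eq_partitionOf_iff.mp hzw)]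
  unfold mrfMfmMass Vcoef
  rw [← tsum_mul_right]
  refine tsum_congr fun K => ?_
  simp only [mul_assoc, ← mul_sum]
  rw [sum_congr rfl (hlabeling K), sum_const, card_filter_partitionOf_eq, Fintype.card_fin,
    nsmul_eq_mul, risingGamma, add_comm (n : ℝ)]
  field_simp

lemma descFactorial_div_risingGamma_le {α0 : ℝ} (hα0 : 0 < α0) {n t : ℕ} (ht : t ≤ n) (K : ℕ) :
    ((K + 1).descFactorial t : ℝ) / risingGamma (((K : ℝ) + 1) * α0) n ≤ 1 / α0 ^ n := by
  have hK : 0 < ((K : ℝ) + 1) * α0 := by positivity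
  rw [div_le_div_iff₀ (risingGamma_pos hK n) (by positivity), one_mul]
  calc ((K + 1).descFactorial t : ℝ) * α0 ^ n ≤ ((K : ℝ) + 1) ^ n * α0 ^ n := by
        gcongr
        calc ((K + 1).descFactorial t : ℝ) ≤ ((K + 1) ^ t : ℕ) :=
              Nat.cast_le.mpr (Nat.descFactorial_le_pow _ _)
          _ ≤ ((K : ℝ) + 1) ^ n := by
              push_cast
              exact pow_le_pow_right₀ (by simp) ht
    _ = (((K : ℝ) + 1) * α0) ^ n := (mul_pow _ _ _).symm
    _ ≤ risingGamma (((K : ℝ) + 1) * α0) n := pow_le_risingGamma hK n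

lemma Vcoef_pos {n t : ℕ} (ht : t ≤ n) {α0 lam : ℝ} (hα0 : 0 < α0) (hlam : 0 < lam) :
    0 < Vcoef n α0 lam t := by
  have hterm_nonneg : ∀ K : ℕ, 0 ≤ ((K + 1).descFactorial t : ℝ) /
      risingGamma (((K : ℝ) + 1) * α0) n * (Real.exp (-lam) * lam ^ K / (K.factorial : ℝ)) :=
    fun K => mul_nonneg (div_nonneg (Nat.cast_nonneg _) (risingGamma_pos (by positivity) n).le)
      (by positivity)
  have hsummable : Summable fun K : ℕ => ((K + 1).descFactorial t : ℝ) /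
      risingGamma (((K : ℝ) + 1) * α0) n * (Real.exp (-lam) * lam ^ K / (K.factorial : ℝ)) :=
    .of_nonneg_of_le hterm_nonneg
      (fun K => mul_le_mul_of_nonneg_right (descFactorial_div_risingGamma_le hα0 ht K)
        (by positivity))
      (((Real.summable_pow_div_factorial lam).mul_left (Real.exp (-lam))).mul_left (1 / α0 ^ n)
        |>.congr fun K => by ring)
  have hdesc : 0 < (t + 1).descFactorial t := Nat.descFactorial_pos.mpr (Nat.le_succ t)
  refine hsummable.tsum_pos hterm_nonneg t ?_
  have hrising := risingGamma_pos (x := ((t : ℝ) + 1) * α0) (by positivity) n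
  positivity

section Update

variable {ι α : Type*} [Fintype ι] [DecidableEq ι] [DecidableEq α] (z : ι → α) (i : ι) (k : α)

lemma image_update_univ :
    univ.image (Function.update z i k) = insert k ((univ.erase i).image z) := by
  rw [← insert_erase (mem_univ i), image_insert, Function.update_self,
    image_congr fun a ha => Function.update_of_ne (ne_of_mem_erase ha) k z,
    insert_erase (mem_univ i)]

lemma filter_update_eq_of_ne {l : α} (hl : l ≠ k) :
    univ.filter (fun a => Function.update z i k a = l) =
      (univ.erase i).filter (fun a => z a = l) := by
  ext a
  by_cases ha : a = i
  · subst ha; simp [Ne.symm hl]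
  · simp [ha]

lemma card_filter_update_eq_self :
    (univ.filter (fun a => Function.update z i k a = k)).card =
      ((univ.erase i).filter (fun a => z a = k)).card + 1 := by
  have hfilter : univ.filter (fun a => Function.update z i k a = k) =
      insert i ((univ.erase i).filter (fun a => z a = k)) := by
    ext a
    by_cases ha : a = i
    · subst ha; simp
    · simp [ha]
  rw [hfilter, card_insert_of_notMem (by simp)]

lemma prod_image_update {M : Type*} [CommMonoid M] (F : ℕ → M) :
    ∏ l ∈ univ.image (Function.update z i k),
        F (univ.filter (fun a => Function.update z i k a = l)).card =
      F (((univ.erase i).filter (fun a => z a = k)).card + 1) *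
        ∏ l ∈ ((univ.erase i).image z).erase k,
          F ((univ.erase i).filter (fun a => z a = l)).card := by
  rw [image_update_univ, ← mul_prod_erase _ _ (mem_insert_self _ _), card_filter_update_eq_self,
    erase_insert_eq_erase]
  exact congrArg _ <| prod_congr rfl fun l hl => by
    rw [filter_update_eq_of_ne z i k (ne_of_mem_erase hl)]

end Update

lemma mrfMfmMass_partitionOf_update {n : ℕ} {α0 : ℝ} (hα0 : 0 < α0) (d lam : ℝ)
    {g : Fin n → Fin n → ℝ} (hg : ∀ a b, g a b = g b a) {α : Type*} [DecidableEq α]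
    (z : Fin n → α) (i : Fin n) (k : α) :
    mrfMfmMass n α0 d lam g (partitionOf (Function.update z i k)) =
      Vcoef n α0 lam (insert k ((univ.erase i).image z)).card *
        (risingGamma α0 (((univ.erase i).filter (fun a => z a = k)).card + 1) *
          ∏ l ∈ ((univ.erase i).image z).erase k,
            risingGamma α0 ((univ.erase i).filter (fun a => z a = l)).card) *
        Real.exp (d * pairEnergy (univ.erase i) g z) *
        Real.exp (d * ∑ b ∈ univ.erase i, g i b * if z b = k then 1 else 0) := by
  rw [mrfMfmMass_partitionOf hα0, prod_image_update, pairEnergy_update hg, image_update_univ,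
    mul_add, Real.exp_add]
  ring

theorem mrf_mfm_polya_urn_general (n : ℕ) (α0 d lam : ℝ)
    (hα0 : 0 < α0) (hlam : 0 < lam)
    (g : Fin n → Fin n → ℝ)
    (hgsym : ∀ i i', g i i' = g i' i)
    (i : Fin n) (z : Fin n → ℕ) :
    ∃ C : ℝ, 0 < C ∧
      (∀ k : ℕ, (∃ i' ∈ Finset.univ.erase i, z i' = k) →
        mrfMfmMass n α0 d lam g (partitionOf (Function.update z i k)) =
          C * (((((Finset.univ.erase i).filter (fun i' => z i' = k)).card : ℝ) + α0) *
            Real.exp (d * ∑ i' ∈ Finset.univ.erase i,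
              g i i' * (if z i' = k then 1 else 0)))) ∧
      (∀ k : ℕ, (∀ i' ∈ Finset.univ.erase i, z i' ≠ k) →
        mrfMfmMass n α0 d lam g (partitionOf (Function.update z i k)) =
          C * (α0 * Vcoef n α0 lam (((Finset.univ.erase i).image z).card + 1) /
            Vcoef n α0 lam ((Finset.univ.erase i).image z).card)) := by
  set B := ∏ l ∈ (univ.erase i).image z,
    risingGamma α0 ((univ.erase i).filter (fun a => z a = l)).card with hBdef
  have hV : 0 < Vcoef n α0 lam ((univ.erase i).image z).card :=
    Vcoef_pos (card_image_le.trans ((card_erase_le).trans_eq (card_fin n))) hα0 hlam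
  have hB : 0 < B := prod_pos fun l _ => risingGamma_pos hα0 _
  refine ⟨Vcoef n α0 lam ((univ.erase i).image z).card * B *
    Real.exp (d * pairEnergy (univ.erase i) g z), by positivity, fun k hk => ?_, fun k hk => ?_⟩
  · have hkS : k ∈ (univ.erase i).image z := by
      obtain ⟨a, ha, rfl⟩ := hk
      exact mem_image_of_mem z ha
    rw [mrfMfmMass_partitionOf_update hα0 d lam hgsym, insert_eq_of_mem hkS,
      risingGamma_succ hα0, hBdef, ← mul_prod_erase _ _ hkS]
    ring
  · have hkS : k ∉ (univ.erase i).image z := fun hkS => by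
      obtain ⟨a, ha, rfl⟩ := mem_image.mp hkS
      exact hk a ha rfl
    have hfiber : (univ.erase i).filter (fun a => z a = k) = ∅ := filter_false_of_mem hk
    have hsum : ∑ b ∈ univ.erase i, g i b * (if z b = k then 1 else 0) = 0 :=
      sum_eq_zero fun b hb => by rw [if_neg (hk b hb), mul_zero]
    rw [mrfMfmMass_partitionOf_update hα0 d lam hgsym, card_insert_of_notMem hkS,
      erase_eq_of_notMem hkS, hfiber, card_empty, zero_add, risingGamma_one hα0, hsum, mul_zero,
      Real.exp_zero, ← hBdef]
    field_simp

/-- Pólya urn scheme for the MRF-constrained MFM (Theorem 1): the conditional prior of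
assigning point `i`, given the assignments `z_{−i}` of the remaining points, satisfies
`P(z_i = k | z_{−i}) ∝ (n_{k,−i} + α_0) exp(d Σ_{i'} g_{ii'} 1(z_{i'} = k))` for an
existing cluster `k`, and `∝ α_0 · V_n(|z_{−i}|+1)/V_n(|z_{−i}|)` for a new cluster. -/
theorem mrf_mfm_polya_urn (n : ℕ) (hn : 2 ≤ n) (α0 d lam : ℝ)
    (hα0 : 0 < α0) (hd : 0 ≤ d) (hlam : 0 < lam)
    (g : Fin n → Fin n → ℝ) (hg01 : ∀ i i', g i i' = 0 ∨ g i i' = 1)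
    (hgsym : ∀ i i', g i i' = g i' i) (hgdiag : ∀ i, g i i = 0)
    (i : Fin n) (z : Fin n → ℕ) :
    ∃ C : ℝ, 0 < C ∧
      (∀ k : ℕ, (∃ i' ∈ Finset.univ.erase i, z i' = k) →
        mrfMfmMass n α0 d lam g (partitionOf (Function.update z i k)) =
          C * (((((Finset.univ.erase i).filter (fun i' => z i' = k)).card : ℝ) + α0) *
            Real.exp (d * ∑ i' ∈ Finset.univ.erase i,
              g i i' * (if z i' = k then 1 else 0)))) ∧
      (∀ k : ℕ, (∀ i' ∈ Finset.univ.erase i, z i' ≠ k) →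
        mrfMfmMass n α0 d lam g (partitionOf (Function.update z i k)) =
          C * (α0 * Vcoef n α0 lam (((Finset.univ.erase i).image z).card + 1) /
            Vcoef n α0 lam ((Finset.univ.erase i).image z).card)) :=
  mrf_mfm_polya_urn_general n α0 d lam hα0 hlam g hgsym i z
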